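/- The stability-based histogram algorithm is (ε, δ)-differentially private: for any two neighbouring datasets D, D' ∈ X^n differing in one row, and any set S of possible output histograms, P(SBH(D) ∈ S) ≤ e^ε · P(SBH(D') ∈ S) + δ. -/

import Mathlib

/-!
At a point `x` whose count is nonzero in both datasets, the two output distributions are the
same Laplace law shifted by at most `1`, post-processed by the same threshold-and-round map; since
the Laplace density at scale `2/ε` changes by at most a factor `e^{ε/2}` under a unit shift, the
two laws are within a factor `e^{ε/2}`. At a point whose count is `1` in one dataset and `0` in
the other, one law is the point mass at `0` and the other puts mass at most `δ/2` off `0`, because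
`Lap(2/ε)` exceeds `2 ln(2/δ)/ε` with probability `δ/4`. Neighbouring datasets change the counts
at no more than two points, each by one, and the outputs at different points are independent, so
changing one coordinate at a time yields the `(ε, δ)` bound.
-/

open MeasureTheory

/-- The Laplace distribution with mean 0 and scale `b`. -/
noncomputable def laplace (b : ℝ) : Measure ℝ :=
  volume.withDensity (fun x => ENNReal.ofReal (1 / (2 * b) * Real.exp (-|x| / b)))

/-- The number of rows of `D` equal to the point `x` (the point function `q_x(D)`). -/
def pointCount {X : Type*} [DecidableEq X] {n : ℕ} (D : Fin n → X) (x : X) : ℕ :=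
  (Finset.univ.filter (fun j => D j = x)).card

/-- The distribution of the output of the stability-based histogram algorithm:
for each point `x` of the domain, if `q_x(D) = 0` the answer is `0`; otherwise the answer
is `q_x(D) + Lap(2/ε)`, zeroed out if below the threshold `2·ln(2/δ)/ε + 1` and rounded
otherwise. Noise is independent across points. -/
noncomputable def SBH {X : Type*} [Fintype X] [DecidableEq X] {n : ℕ}
    (ε δ : ℝ) (D : Fin n → X) : Measure (X → ℝ) :=
  Measure.pi (fun x =>
    if pointCount D x = 0 then Measure.dirac 0
    else (laplace (2 / ε)).map (fun z =>
      if (pointCount D x : ℝ) + z < 2 * Real.log (2 / δ) / ε + 1 then 0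
      else (round ((pointCount D x : ℝ) + z) : ℝ)))

/-- Two `n`-row datasets are neighbours: they differ in exactly one row. -/
def Neighbor {X : Type*} {n : ℕ} (D D' : Fin n → X) : Prop :=
  ∃ i, D i ≠ D' i ∧ ∀ j, j ≠ i → D j = D' j

open Set
open scoped ENNReal

/-- One-sided `(log c, d)`-indistinguishability, as in approximate differential privacy. -/
def ApproxLE {α : Type*} [MeasurableSpace α] (μ ν : Measure α) (c d : ℝ≥0∞) : Prop :=
  ∀ s, MeasurableSet s → μ s ≤ c * ν s + d

namespace ApproxLE

variable {α β : Type*} [MeasurableSpace α] [MeasurableSpace β] {μ ν ρ : Measure α}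
  {c c' d d' : ℝ≥0∞}

theorem mono (h : ApproxLE μ ν c d) (hc : c ≤ c') (hd : d ≤ d') : ApproxLE μ ν c' d' :=
  fun s hs => (h s hs).trans (by gcongr)

theorem trans (h₁ : ApproxLE μ ρ c d) (h₂ : ApproxLE ρ ν c' d') :
    ApproxLE μ ν (c * c') (c * d' + d) := fun s hs =>
  calc μ s ≤ c * ρ s + d := h₁ s hs
    _ ≤ c * (c' * ν s + d') + d := by gcongr; exact h₂ s hs
    _ = c * c' * ν s + (c * d' + d) := by ring

theorem of_le_smul (h : μ ≤ c • ν) : ApproxLE μ ν c 0 := fun s _ => by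
  simpa using h s

theorem map (h : ApproxLE μ ν c d) {f : α → β} (hf : Measurable f) :
    ApproxLE (μ.map f) (ν.map f) c d := fun s hs => by
  rw [Measure.map_apply hf hs, Measure.map_apply hf hs]
  exact h _ (hf hs)

theorem prod_right [SFinite μ] [SFinite ν] (h : ApproxLE μ ν c d) (ρ : Measure β)
    [IsProbabilityMeasure ρ] : ApproxLE (μ.prod ρ) (ν.prod ρ) c d := by
  intro s hs
  calc (μ.prod ρ) s = ∫⁻ y, μ ((·, y) ⁻¹' s) ∂ρ := Measure.prod_apply_symm hs
    _ ≤ ∫⁻ y, (c * ν ((·, y) ⁻¹' s) + d) ∂ρ :=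
      lintegral_mono fun y => h _ (measurable_prodMk_right hs)
    _ = c * (ν.prod ρ) s + d := by
      rw [lintegral_add_right _ measurable_const,
        lintegral_const_mul _ (measurable_measure_prodMk_right hs), lintegral_const,
        measure_univ, mul_one, Measure.prod_apply_symm hs]

end ApproxLE

section Dirac

variable {α : Type*} [MeasurableSpace α] (μ : Measure α) [IsProbabilityMeasure μ] (a : α)

theorem approxLE_dirac : ApproxLE μ (Measure.dirac a) 1 (μ {a}ᶜ) := by
  intro s hs
  by_cases ha : a ∈ s
  · rw [Measure.dirac_apply_of_mem ha, one_mul]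
    exact prob_le_one.trans le_self_add
  · exact (measure_mono (subset_compl_singleton_iff.mpr ha)).trans le_add_self

theorem dirac_approxLE : ApproxLE (Measure.dirac a) μ 1 (μ {a}ᶜ) := by
  intro s hs
  by_cases ha : a ∈ s
  · rw [Measure.dirac_apply_of_mem ha, one_mul, ← prob_add_prob_compl (μ := μ) hs]
    gcongr
    exact singleton_subset_iff.mpr ha
  · rw [Measure.dirac_apply' a hs, indicator_of_notMem ha]
    exact zero_le

end Dirac

section Pi

variable {ι : Type*} [Fintype ι] [DecidableEq ι] {α : ι → Type*} [∀ i, MeasurableSpace (α i)]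
  {μ ν : ∀ i, Measure (α i)} [∀ i, IsProbabilityMeasure (μ i)] [∀ i, IsProbabilityMeasure (ν i)]
  {c c' d d' : ℝ≥0∞}

theorem ApproxLE.pi_of_eq_off {i₀ : ι} (h : ApproxLE (μ i₀) (ν i₀) c d)
    (heq : ∀ i, i ≠ i₀ → μ i = ν i) : ApproxLE (Measure.pi μ) (Measure.pi ν) c d := by
  let p : ι → Prop := (· = i₀)
  let _ : Unique {i // p i} := ⟨⟨⟨i₀, rfl⟩⟩, fun i => Subtype.ext i.2⟩
  let _ : Fintype {i // p i} := Subtype.fintype p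
  have h₀ : ApproxLE (Measure.pi fun i : {i // p i} => μ i) (Measure.pi fun i : {i // p i} => ν i)
      c d := by
    rw [← (measurePreserving_piUnique fun i : {i // p i} => μ i).symm.map_eq,
      ← (measurePreserving_piUnique fun i : {i // p i} => ν i).symm.map_eq]
    exact h.map (MeasurableEquiv.piUnique _).symm.measurable
  have hrest : (Measure.pi fun i : {i // ¬p i} => μ i) = Measure.pi fun i : {i // ¬p i} => ν i :=
    congrArg Measure.pi (funext fun i => heq i i.2)
  rw [← (measurePreserving_piEquivPiSubtypeProd μ p).symm.map_eq,
    ← (measurePreserving_piEquivPiSubtypeProd ν p).symm.map_eq, hrest]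
  exact (h₀.prod_right (Measure.pi fun i : {i // ¬p i} => ν i)).map
    (MeasurableEquiv.piEquivPiSubtypeProd α p).symm.measurable

theorem ApproxLE.pi_of_eq_off_pair {a b : ι} (hab : a ≠ b)
    (heq : ∀ i, i ≠ a → i ≠ b → μ i = ν i) (ha : ApproxLE (μ a) (ν a) c d)
    (hb : ApproxLE (μ b) (ν b) c' d') :
    ApproxLE (Measure.pi μ) (Measure.pi ν) (c * c') (c * d' + d) := by
  let m := Function.update μ a (ν a)
  have : ∀ i, IsProbabilityMeasure (m i) := fun i => by
    by_cases hi : i = a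
    · subst hi; simp only [m, Function.update_self]; infer_instance
    · simp only [m, Function.update_of_ne hi]; infer_instance
  refine (ApproxLE.pi_of_eq_off (ν := m) (i₀ := a) ?_ fun i hi => ?_).trans
    (ApproxLE.pi_of_eq_off (i₀ := b) ?_ fun i hi => ?_)
  · simpa [m] using ha
  · simp [m, Function.update_of_ne hi]
  · simpa [m, Function.update_of_ne hab.symm] using hb
  · by_cases hia : i = a
    · subst hia; simp [m]
    · simpa [m, Function.update_of_ne hia] using heq i hia hi

/-- The additive step is taken first, since an error `d` made before a factor `c` gets
multiplied by it. -/
theorem ApproxLE.pi_of_eq_off_pair_of_or {a b : ι} (hab : a ≠ b)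
    (heq : ∀ i, i ≠ a → i ≠ b → μ i = ν i) (hc : 1 ≤ c)
    (ha : ApproxLE (μ a) (ν a) 1 d ∨ ApproxLE (μ a) (ν a) c 0)
    (hb : ApproxLE (μ b) (ν b) 1 d ∨ ApproxLE (μ b) (ν b) c 0) :
    ApproxLE (Measure.pi μ) (Measure.pi ν) (c * c) (d + d) := by
  have hcc : c ≤ c * c := le_mul_of_one_le_left zero_le hc
  rcases ha with ha | ha <;> rcases hb with hb | hb
  · exact (pi_of_eq_off_pair hab heq ha hb).mono (by simpa using hcc.trans' hc) (by simp)
  · exact (pi_of_eq_off_pair hab heq ha hb).mono (by simpa using hcc) (by simp)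
  · exact (pi_of_eq_off_pair hab.symm (fun i hb ha => heq i ha hb) hb ha).mono
      (by simpa using hcc) (by simp)
  · exact (pi_of_eq_off_pair hab heq ha hb).mono le_rfl (by simp)

end Pi

section Laplace

variable {b : ℝ}

noncomputable def laplacePDF (b x : ℝ) : ℝ := 1 / (2 * b) * Real.exp (-|x| / b)

theorem laplace_eq_withDensity (b : ℝ) :
    laplace b = volume.withDensity fun x => ENNReal.ofReal (laplacePDF b x) :=
  rfl

theorem laplacePDF_nonneg (hb : 0 ≤ b) (x : ℝ) : 0 ≤ laplacePDF b x := by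
  unfold laplacePDF; positivity

theorem measurable_laplacePDF (b : ℝ) : Measurable (laplacePDF b) := by
  unfold laplacePDF; fun_prop

theorem laplacePDF_sub_le (hb : 0 < b) (x s s' : ℝ) :
    laplacePDF b (x - s) ≤ Real.exp (|s - s'| / b) * laplacePDF b (x - s') := by
  have htri : -|x - s| ≤ |s - s'| + -|x - s'| := by
    linarith [abs_sub_le x s s', abs_sub_comm s' s]
  unfold laplacePDF
  rw [mul_left_comm, ← Real.exp_add, ← add_div]
  gcongr

theorem integral_exp_neg_div_Ioi (hb : 0 < b) (t : ℝ) :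
    ∫ x in Ioi t, 1 / (2 * b) * Real.exp (-x / b) = Real.exp (-t / b) / 2 := by
  have hlin : ∀ x, -x / b = -b⁻¹ * x := fun x => by ring
  simp_rw [hlin]
  rw [integral_const_mul, integral_exp_mul_Ioi (neg_neg_of_pos (inv_pos.mpr hb))]
  field_simp

theorem laplace_Ici (hb : 0 < b) {t : ℝ} (ht : 0 ≤ t) :
    laplace b (Ici t) = ENNReal.ofReal (Real.exp (-t / b) / 2) := by
  have hint : ∫ x in Ioi t, laplacePDF b x = Real.exp (-t / b) / 2 := by
    rw [← integral_exp_neg_div_Ioi hb t]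
    refine setIntegral_congr_fun measurableSet_Ioi fun x hx => ?_
    rw [laplacePDF, abs_of_pos (ht.trans_lt hx)]
  have hintegrable : IntegrableOn (laplacePDF b) (Ioi t) :=
    Integrable.of_integral_ne_zero (by rw [hint]; positivity)
  rw [laplace_eq_withDensity, withDensity_apply _ measurableSet_Ici,
    ← restrict_Ioi_eq_restrict_Ici, ← hint, ofReal_integral_eq_lintegral_ofReal hintegrable
      (ae_of_all _ (laplacePDF_nonneg hb.le))]

theorem isProbabilityMeasure_laplace (hb : 0 < b) : IsProbabilityMeasure (laplace b) := by
  have hint : ∫ x, laplacePDF b x = 1 := by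
    rw [show laplacePDF b = fun x => (fun y => 1 / (2 * b) * Real.exp (-y / b)) |x| from rfl,
      integral_comp_abs, integral_exp_neg_div_Ioi hb]
    simp
  constructor
  rw [laplace_eq_withDensity, withDensity_apply _ MeasurableSet.univ, Measure.restrict_univ,
    ← ofReal_integral_eq_lintegral_ofReal
      (Integrable.of_integral_ne_zero (by rw [hint]; exact one_ne_zero))
      (ae_of_all _ (laplacePDF_nonneg hb.le)), hint, ENNReal.ofReal_one]

theorem laplace_map_const_add (b s : ℝ) :
    (laplace b).map (s + ·) =
      volume.withDensity fun x => ENNReal.ofReal (laplacePDF b (x - s)) := by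
  ext A hA
  rw [Measure.map_apply (measurable_const_add s) hA, laplace_eq_withDensity,
    withDensity_apply _ (measurable_const_add s hA), withDensity_apply _ hA,
    ← (measurePreserving_add_left volume s).setLIntegral_comp_preimage hA
      (f := fun x => ENNReal.ofReal (laplacePDF b (x - s)))
      ((measurable_laplacePDF b).comp (measurable_sub_const s)).ennreal_ofReal]
  simp only [add_sub_cancel_left]

theorem laplace_map_const_add_approxLE (hb : 0 < b) (s s' : ℝ) :
    ApproxLE ((laplace b).map (s + ·)) ((laplace b).map (s' + ·))
      (ENNReal.ofReal (Real.exp (|s - s'| / b))) 0 := by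
  refine .of_le_smul ?_
  rw [laplace_map_const_add, laplace_map_const_add, ← withDensity_smul' _ _ ENNReal.ofReal_ne_top]
  refine withDensity_mono (ae_of_all _ fun x => ?_)
  rw [Pi.smul_apply, smul_eq_mul, ← ENNReal.ofReal_mul (Real.exp_pos _).le]
  exact ENNReal.ofReal_le_ofReal (laplacePDF_sub_le hb x s s')

end Laplace

section StabilityBasedHistogram

variable {ε δ : ℝ}

noncomputable def threshRound (T y : ℝ) : ℝ := if y < T then 0 else round y

theorem measurable_threshRound (T : ℝ) : Measurable (threshRound T) := by
  unfold threshRound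
  simp_rw [round_eq]
  exact Measurable.ite measurableSet_Iio measurable_const (by fun_prop)

noncomputable def sbhThreshold (ε δ : ℝ) : ℝ := 2 * Real.log (2 / δ) / ε + 1

noncomputable def sbhCoord (ε δ : ℝ) (k : ℕ) : Measure ℝ :=
  if k = 0 then Measure.dirac 0
  else (laplace (2 / ε)).map fun z => threshRound (sbhThreshold ε δ) (k + z)

theorem sbh_eq_pi {X : Type*} [Fintype X] [DecidableEq X] {n : ℕ} (D : Fin n → X) :
    SBH ε δ D = Measure.pi fun x => sbhCoord ε δ (pointCount D x) :=
  rfl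

theorem sbhCoord_of_ne_zero {k : ℕ} (hk : k ≠ 0) :
    sbhCoord ε δ k = ((laplace (2 / ε)).map ((k : ℝ) + ·)).map
      (threshRound (sbhThreshold ε δ)) := by
  rw [sbhCoord, if_neg hk, Measure.map_map (measurable_threshRound _) (measurable_const_add _)]
  rfl

theorem isProbabilityMeasure_sbhCoord (hε : 0 < ε) (k : ℕ) :
    IsProbabilityMeasure (sbhCoord ε δ k) := by
  have := isProbabilityMeasure_laplace (div_pos two_pos hε)
  by_cases hk : k = 0
  · rw [sbhCoord, if_pos hk]; infer_instance
  · rw [sbhCoord, if_neg hk]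
    exact Measure.isProbabilityMeasure_map
      ((measurable_threshRound _).comp (measurable_const_add _)).aemeasurable

theorem sbhCoord_approxLE_of_ne_zero (hε : 0 < ε) {k k' : ℕ} (hk : k ≠ 0) (hk' : k' ≠ 0) :
    ApproxLE (sbhCoord ε δ k) (sbhCoord ε δ k')
      (ENNReal.ofReal (Real.exp (ε / 2 * |(k : ℝ) - k'|))) 0 := by
  rw [sbhCoord_of_ne_zero hk, sbhCoord_of_ne_zero hk']
  have h := laplace_map_const_add_approxLE (div_pos two_pos hε) k k'
  rw [show |(k : ℝ) - k'| / (2 / ε) = ε / 2 * |(k : ℝ) - k'| by field_simp] at h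
  exact h.map (measurable_threshRound _)

/-- The threshold `2 ln(2/δ)/ε + 1` is `1 + t` with `P(Lap(2/ε) ≥ t) = δ/4`. -/
theorem sbhCoord_one_compl_zero_le (hε : 0 < ε) (hδ : δ ∈ Ioo (0 : ℝ) 1) :
    sbhCoord ε δ 1 {0}ᶜ ≤ ENNReal.ofReal (δ / 2) := by
  obtain ⟨hδ0, hδ1⟩ := hδ
  have hlog : 0 ≤ Real.log (2 / δ) := Real.log_nonneg (by rw [le_div_iff₀ hδ0]; linarith)
  have hsub : (fun z => threshRound (sbhThreshold ε δ) ((1 : ℕ) + z)) ⁻¹' {0}ᶜ ⊆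
      Ici (2 * Real.log (2 / δ) / ε) := fun z hz => by
    by_contra hlt
    simp only [mem_Ici, not_le] at hlt
    exact hz (if_pos (by rw [sbhThreshold]; push_cast; linarith))
  rw [sbhCoord, if_neg one_ne_zero,
    Measure.map_apply (f := fun z => threshRound (sbhThreshold ε δ) ((1 : ℕ) + z))
      ((measurable_threshRound _).comp (measurable_const_add _)) (measurableSet_singleton 0).compl]
  refine (measure_mono hsub).trans ?_
  rw [laplace_Ici (div_pos two_pos hε) (by positivity)]
  refine ENNReal.ofReal_le_ofReal ?_
  have hexp : Real.exp (-(2 * Real.log (2 / δ) / ε) / (2 / ε)) = δ / 2 := by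
    rw [show -(2 * Real.log (2 / δ) / ε) / (2 / ε) = -Real.log (2 / δ) by field_simp,
      Real.exp_neg, Real.exp_log (by positivity), inv_div]
  linarith

theorem sbhCoord_succ_approxLE (hε : 0 < ε) (hδ : δ ∈ Ioo (0 : ℝ) 1) (k : ℕ) :
    (ApproxLE (sbhCoord ε δ (k + 1)) (sbhCoord ε δ k) 1 (ENNReal.ofReal (δ / 2)) ∨
      ApproxLE (sbhCoord ε δ (k + 1)) (sbhCoord ε δ k) (ENNReal.ofReal (Real.exp (ε / 2))) 0) ∧
    (ApproxLE (sbhCoord ε δ k) (sbhCoord ε δ (k + 1)) 1 (ENNReal.ofReal (δ / 2)) ∨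
      ApproxLE (sbhCoord ε δ k) (sbhCoord ε δ (k + 1)) (ENNReal.ofReal (Real.exp (ε / 2))) 0) := by
  obtain rfl | hk := eq_or_ne k 0
  · have := isProbabilityMeasure_sbhCoord (δ := δ) hε 1
    have hzero : sbhCoord ε δ 0 = Measure.dirac 0 := if_pos rfl
    have htail := sbhCoord_one_compl_zero_le hε hδ
    rw [hzero]
    exact ⟨.inl ((approxLE_dirac _ 0).mono le_rfl htail),
      .inl ((dirac_approxLE _ 0).mono le_rfl htail)⟩
  · have hdist : |((k + 1 : ℕ) : ℝ) - k| = 1 := by push_cast; simp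
    have h := sbhCoord_approxLE_of_ne_zero (δ := δ) hε k.succ_ne_zero hk
    have h' := sbhCoord_approxLE_of_ne_zero (δ := δ) hε hk k.succ_ne_zero
    rw [hdist, mul_one] at h
    rw [abs_sub_comm, hdist, mul_one] at h'
    exact ⟨.inr h, .inr h'⟩

end StabilityBasedHistogram

section PointCount

variable {X : Type*} [DecidableEq X] {n : ℕ} {D D' : Fin n → X} {i : Fin n}

theorem pointCount_add_ite (hD : ∀ j, j ≠ i → D j = D' j) (x : X) :
    pointCount D x + (if D' i = x then 1 else 0) =
      pointCount D' x + (if D i = x then 1 else 0) := by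
  simp only [pointCount, Finset.card_filter]
  rw [← Finset.add_sum_erase _ _ (Finset.mem_univ i),
    ← Finset.add_sum_erase _ _ (Finset.mem_univ i),
    Finset.sum_congr rfl fun j hj => by rw [hD j (Finset.ne_of_mem_erase hj)]]
  ring

theorem pointCount_apply_eq_succ (hi : D i ≠ D' i) (hD : ∀ j, j ≠ i → D j = D' j) :
    pointCount D (D i) = pointCount D' (D i) + 1 := by
  simpa [hi.symm] using pointCount_add_ite hD (D i)

theorem pointCount_eq_of_ne (hD : ∀ j, j ≠ i → D j = D' j) {x : X} (hx : x ≠ D i)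
    (hx' : x ≠ D' i) : pointCount D x = pointCount D' x := by
  simpa [hx.symm, hx'.symm] using pointCount_add_ite hD x

end PointCount

/-- The stability-based histogram algorithm is `(ε, δ)`-differentially private. -/
theorem sbh_dp {X : Type*} [Fintype X] [DecidableEq X] {n : ℕ}
    (ε δ : ℝ) (hε : 0 < ε) (hδ : δ ∈ Set.Ioo (0 : ℝ) 1)
    (D D' : Fin n → X) (hN : Neighbor D D') (S : Set (X → ℝ)) (hS : MeasurableSet S) :
    SBH ε δ D S ≤ ENNReal.ofReal (Real.exp ε) * SBH ε δ D' S + ENNReal.ofReal δ := by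
  obtain ⟨i, hi, hD⟩ := hN
  have := isProbabilityMeasure_sbhCoord (δ := δ) hε
  have hexp : ENNReal.ofReal (Real.exp (ε / 2)) * ENNReal.ofReal (Real.exp (ε / 2)) =
      ENNReal.ofReal (Real.exp ε) := by
    rw [← ENNReal.ofReal_mul (Real.exp_nonneg _), ← Real.exp_add, add_halves]
  have hδ2 : ENNReal.ofReal (δ / 2) + ENNReal.ofReal (δ / 2) = ENNReal.ofReal δ := by
    rw [← ENNReal.ofReal_add (by linarith [hδ.1]) (by linarith [hδ.1]), add_halves]
  rw [sbh_eq_pi, sbh_eq_pi, ← hexp, ← hδ2]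
  refine ApproxLE.pi_of_eq_off_pair_of_or hi
    (fun x hx hx' => congrArg _ (pointCount_eq_of_ne hD hx hx'))
    (ENNReal.one_le_ofReal.mpr (Real.one_le_exp (by positivity))) ?_ ?_ S hS
  · rw [pointCount_apply_eq_succ hi hD]
    exact (sbhCoord_succ_approxLE hε hδ _).1
  · rw [pointCount_apply_eq_succ hi.symm fun j hj => (hD j hj).symm]
    exact (sbhCoord_succ_approxLE hε hδ _).2
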